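/- arXiv:1607.02294 — 4 statements merged into one kernel-verified Lean document; each statement's English description precedes it below -/
import Mathlib

section
/- For positive reals α and β, the partial derivative of the Beta function B(α,β) = ∫₀¹ x^(α-1)(1-x)^(β-1) dx with respect to α equals B(α,β)·(ψ(α) − ψ(α+β)), where ψ is the digamma function. Equivalently, ∫₀¹ x^(α-1)(1-x)^(β-1) ln x dx = B(α,β)(ψ(α) − ψ(α+β)). -/
open MeasureTheory Real

/-- The digamma function `ψ = Γ'/Γ`. -/
noncomputable def digamma (x : ℝ) : ℝ := deriv Real.Gamma x / Real.Gamma x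

/-- The Beta function `B(α,β) = ∫₀¹ x^(α-1)(1-x)^(β-1) dx`. -/
noncomputable def betaFun (α β : ℝ) : ℝ :=
  ∫ x in Set.Ioo (0 : ℝ) 1, x ^ (α - 1) * (1 - x) ^ (β - 1)

/-!
Both claims come from computing `∂B/∂α` in two ways. Through `B(α,β) = Γ(α)Γ(β)/Γ(α+β)` and
`Γ' = Γ ψ`, the quotient rule gives `B(α,β)(ψ(α) - ψ(α+β))`. Differentiating under the integral
sign gives `∫₀¹ x^(α-1)(1-x)^(β-1) ln x dx`; the domination near `α` comes from
`|x^s ln x| ≤ x^(s-t)/t` on `(0,1]`, which trades an arbitrarily small power of `x` for the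
logarithm. Derivatives being unique, the two values agree.
-/

lemma ofReal_beta_integrand {c d x : ℝ} (hx : x ∈ Set.Icc (0 : ℝ) 1) :
    ((x ^ (c - 1) * (1 - x) ^ (d - 1) : ℝ) : ℂ) =
      (x : ℂ) ^ ((c : ℂ) - 1) * (1 - (x : ℂ)) ^ ((d : ℂ) - 1) := by
  rw [Complex.ofReal_mul, Complex.ofReal_cpow hx.1, Complex.ofReal_cpow (by linarith [hx.2])]
  push_cast
  rfl

lemma integrableOn_beta_integrand {c d : ℝ} (hc : 0 < c) (hd : 0 < d) :
    IntegrableOn (fun x : ℝ => x ^ (c - 1) * (1 - x) ^ (d - 1)) (Set.Ioo 0 1) := by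
  have hℂ := (Complex.betaIntegral_convergent (u := c) (v := d) (by simpa) (by simpa)).1
  refine IntegrableOn.congr_fun (hℂ.mono_set Set.Ioo_subset_Ioc_self).norm (fun x hx => ?_)
    measurableSet_Ioo
  rw [← ofReal_beta_integrand (Set.Ioo_subset_Icc_self hx), Complex.norm_real, norm_of_nonneg]
  exact mul_nonneg (rpow_nonneg hx.1.le _) (rpow_nonneg (by linarith [hx.2]) _)

lemma betaFun_eq_Gamma_mul_Gamma_div_Gamma {c d : ℝ} (hc : 0 < c) (hd : 0 < d) :
    betaFun c d = Gamma c * Gamma d / Gamma (c + d) := by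
  have hℂ := Complex.betaIntegral_eq_Gamma_mul_div c d (by simpa) (by simpa)
  rw [Complex.betaIntegral, intervalIntegral.integral_of_le zero_le_one,
    integral_Ioc_eq_integral_Ioo,
    ← setIntegral_congr_fun measurableSet_Ioo (fun x hx => ofReal_beta_integrand (Set.Ioo_subset_Icc_self hx)),
    integral_complex_ofReal, ← Complex.ofReal_add, Complex.Gamma_ofReal, Complex.Gamma_ofReal,
    Complex.Gamma_ofReal] at hℂ
  exact_mod_cast hℂ

lemma hasDerivAt_Gamma_of_pos {x : ℝ} (hx : 0 < x) :
    HasDerivAt Gamma (Gamma x * digamma x) x := by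
  have hdiff : DifferentiableAt ℝ Gamma x :=
    differentiableAt_Gamma fun m => (neg_nonpos.mpr m.cast_nonneg).trans_lt hx |>.ne'
  rw [digamma, mul_div_cancel₀ _ (Gamma_pos_of_pos hx).ne']
  exact hdiff.hasDerivAt

lemma hasDerivAt_Gamma_mul_Gamma_div_Gamma {α β : ℝ} (hα : 0 < α) (hαβ : 0 < α + β) :
    HasDerivAt (fun a => Gamma a * Gamma β / Gamma (a + β))
      (Gamma α * Gamma β / Gamma (α + β) * (digamma α - digamma (α + β))) α := by
  have hnum := (hasDerivAt_Gamma_of_pos hα).mul_const (Gamma β)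
  have hden := (hasDerivAt_Gamma_of_pos hαβ).comp_add_const α β
  refine (hnum.div hden (Gamma_pos_of_pos hαβ).ne').congr_deriv ?_
  field_simp

lemma abs_rpow_mul_log_le {x t : ℝ} (s : ℝ) (hx0 : 0 < x) (hx1 : x ≤ 1) (ht : 0 < t) :
    |x ^ s * log x| ≤ x ^ (s - t) / t := by
  have h := abs_log_mul_self_rpow_lt x t hx0 hx1 ht
  have hsplit : x ^ s = x ^ (s - t) * x ^ t := by rw [← rpow_add hx0, sub_add_cancel]
  rw [hsplit, mul_assoc, mul_comm (x ^ t), abs_mul,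
    abs_of_pos (rpow_pos_of_pos hx0 _), div_eq_mul_one_div]
  exact mul_le_mul_of_nonneg_left h.le (rpow_pos_of_pos hx0 _).le

lemma hasDerivAt_beta_integrand_fst {x : ℝ} (β a : ℝ) (hx : 0 < x) :
    HasDerivAt (fun a => x ^ (a - 1) * (1 - x) ^ (β - 1))
      (x ^ (a - 1) * (1 - x) ^ (β - 1) * log x) a := by
  have h := ((hasDerivAt_id a).sub_const 1).const_rpow hx
  refine (h.mul_const ((1 - x) ^ (β - 1))).congr_deriv ?_
  simp only [id]
  ring

lemma norm_beta_integrand_mul_log_le {a t x : ℝ} (β : ℝ) (ht : 0 < t) (ha : 2 * t ≤ a)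
    (hx : x ∈ Set.Ioo (0 : ℝ) 1) :
    ‖x ^ (a - 1) * (1 - x) ^ (β - 1) * log x‖ ≤ x ^ (t - 1) * (1 - x) ^ (β - 1) / t := by
  obtain ⟨hx0, hx1⟩ := hx
  have h1x : 0 ≤ (1 - x) ^ (β - 1) := rpow_nonneg (by linarith) _
  have hlog : |x ^ (a - 1) * log x| ≤ x ^ (t - 1) / t :=
    (abs_rpow_mul_log_le (a - 1) hx0 hx1.le ht).trans <| div_le_div_of_nonneg_right
      (rpow_le_rpow_of_exponent_ge hx0 hx1.le (by linarith)) ht.le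
  rw [norm_eq_abs, mul_right_comm, abs_mul, abs_of_nonneg h1x, mul_div_right_comm]
  exact mul_le_mul_of_nonneg_right hlog h1x

lemma hasDerivAt_betaFun_fst_eq_integral {α β : ℝ} (hα : 0 < α) (hβ : 0 < β) :
    HasDerivAt (fun a => betaFun a β)
      (∫ x in Set.Ioo (0 : ℝ) 1, x ^ (α - 1) * (1 - x) ^ (β - 1) * log x) α := by
  refine (hasDerivAt_integral_of_dominated_loc_of_deriv_le (x₀ := α)
    (F := fun a x => x ^ (a - 1) * (1 - x) ^ (β - 1))
    (F' := fun a x => x ^ (a - 1) * (1 - x) ^ (β - 1) * log x)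
    (bound := fun x => x ^ (α / 4 - 1) * (1 - x) ^ (β - 1) / (α / 4))
    (Metric.ball_mem_nhds α (half_pos hα))
    (.of_forall fun _ => (by fun_prop : Measurable _).aestronglyMeasurable)
    (integrableOn_beta_integrand hα hβ)
    (by fun_prop : Measurable _).aestronglyMeasurable ?_
    ((integrableOn_beta_integrand (by positivity) hβ).div_const _) ?_).2
  · refine (ae_restrict_iff' measurableSet_Ioo).2 (.of_forall fun x hx a ha => ?_)
    rw [Metric.mem_ball, dist_eq, abs_sub_lt_iff] at ha
    exact norm_beta_integrand_mul_log_le β (by positivity) (by linarith) hx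
  · exact (ae_restrict_iff' measurableSet_Ioo).2
      (.of_forall fun x hx a _ => hasDerivAt_beta_integrand_fst β a hx.1)

lemma hasDerivAt_betaFun_fst {α β : ℝ} (hα : 0 < α) (hβ : 0 < β) :
    HasDerivAt (fun a => betaFun a β) (betaFun α β * (digamma α - digamma (α + β))) α := by
  rw [betaFun_eq_Gamma_mul_Gamma_div_Gamma hα hβ]
  refine (hasDerivAt_Gamma_mul_Gamma_div_Gamma hα (by linarith)).congr_of_eventuallyEq ?_
  filter_upwards [eventually_gt_nhds hα] with a ha
  exact betaFun_eq_Gamma_mul_Gamma_div_Gamma ha hβ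

theorem beta_deriv_digamma (α β : ℝ) (hα : 0 < α) (hβ : 0 < β) :
    (∫ x in Set.Ioo (0 : ℝ) 1, x ^ (α - 1) * (1 - x) ^ (β - 1) * Real.log x) =
      betaFun α β * (digamma α - digamma (α + β)) ∧
    HasDerivAt (fun a => betaFun a β)
      (betaFun α β * (digamma α - digamma (α + β))) α :=
  ⟨(hasDerivAt_betaFun_fst_eq_integral hα hβ).unique (hasDerivAt_betaFun_fst hα hβ),
    hasDerivAt_betaFun_fst hα hβ⟩
end

section
/- Let m ≥ 1 and n ≥ 1 be integers. Then −m · (Γ(mn)/(Γ(n)·Γ(n(m−1)))) · ∫₀¹ x^n (1−x)^(n(m−1)−1) ln x dx = H_{mn} − H_n, where H_k denotes the k-th harmonic number. -/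
open MeasureTheory Real

/-!
With `I(a, b) = ∫₀¹ xᵃ (1 - x)ᵇ log x`, splitting `(1 - x)ᵇ⁺¹ = (1 - x)ᵇ - x (1 - x)ᵇ` gives
`I(a, b + 1) = I(a, b) - I(a + 1, b)`, and `I(a, 0) = -1 / (a + 1)²`; induction on `b` yields
`I(a, b) = -B(a + 1, b + 1) (H_{a+b+1} - H_a)`. For `a = n`, `b = n(m - 1) - 1` the Gamma prefactor
`m Γ(mn) / (Γ(n) Γ(n(m - 1)))` is exactly `1 / B(n + 1, n(m - 1))`.
-/

lemma intervalIntegrable_pow_mul_one_sub_pow_mul_log (a b : ℕ) (c d : ℝ) :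
    IntervalIntegrable (fun x => x ^ a * (1 - x) ^ b * log x) volume c d :=
  intervalIntegral.intervalIntegrable_log'.continuousOn_mul (by fun_prop)

lemma integral_pow_mul_log_zero_one (a : ℕ) :
    ∫ x in (0 : ℝ)..1, x ^ a * log x = -1 / ((a : ℝ) + 1) ^ 2 := by
  let F : ℝ → ℝ := fun x => x ^ (a + 1) * log x / (a + 1) - x ^ (a + 1) / (a + 1) ^ 2
  have hF_cont : Continuous F := by
    have h : F = fun x => x ^ a * (x * log x) / (a + 1) - x ^ (a + 1) / (a + 1) ^ 2 := by
      ext x; simp only [F]; ring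
    rw [h]
    fun_prop
  have hF_deriv : ∀ x ∈ Set.Ioo (0 : ℝ) 1, HasDerivAt F (x ^ a * log x) x := by
    intro x hx
    have hx0 : x ≠ 0 := hx.1.ne'
    have h := (((hasDerivAt_pow (a + 1) x).mul (hasDerivAt_log hx0)).div_const
      ((a : ℝ) + 1)).sub ((hasDerivAt_pow (a + 1) x).div_const (((a : ℝ) + 1) ^ 2))
    refine h.congr_deriv ?_
    field_simp
    push_cast
    ring
  rw [intervalIntegral.integral_eq_sub_of_hasDerivAt_of_le zero_le_one hF_cont.continuousOn
    hF_deriv (by simpa using intervalIntegrable_pow_mul_one_sub_pow_mul_log a 0 0 1)]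
  simp [F]
  ring

open scoped Nat in
theorem integral_pow_mul_one_sub_pow_mul_log (a b : ℕ) :
    ∫ x in (0 : ℝ)..1, x ^ a * (1 - x) ^ b * log x =
      -((a ! * b ! / (a + b + 1)! : ℝ) * ((harmonic (a + b + 1) : ℝ) - harmonic a)) := by
  induction b generalizing a with
  | zero =>
    simp only [pow_zero, mul_one, integral_pow_mul_log_zero_one, add_zero, Nat.factorial_zero,
      harmonic_succ, Nat.factorial_succ]
    push_cast
    field_simp
    ring
  | succ b ih =>
    have hsplit : (fun x : ℝ => x ^ a * (1 - x) ^ (b + 1) * log x) =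
        fun x => x ^ a * (1 - x) ^ b * log x - x ^ (a + 1) * (1 - x) ^ b * log x := by
      ext x; ring
    rw [hsplit, intervalIntegral.integral_sub (intervalIntegrable_pow_mul_one_sub_pow_mul_log ..)
      (intervalIntegrable_pow_mul_one_sub_pow_mul_log ..), ih, ih,
      show a + 1 + b + 1 = a + b + 1 + 1 by ring, show a + (b + 1) + 1 = a + b + 1 + 1 by ring,
      harmonic_succ (a + b + 1), harmonic_succ a,
      Nat.factorial_succ (a + b + 1), Nat.factorial_succ b, Nat.factorial_succ a]
    push_cast
    field_simp
    ring

theorem average_diagonal_entropy_integral (m n : ℕ) (hm : 2 ≤ m) (hn : 1 ≤ n) :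
    -(m : ℝ) * (Real.Gamma (m * n) / (Real.Gamma n * Real.Gamma (n * (m - 1)))) *
        ∫ x in Set.Ioo (0 : ℝ) 1, x ^ n * (1 - x) ^ (n * (m - 1) - 1) * Real.log x =
      (harmonic (m * n) : ℝ) - (harmonic n : ℝ) := by
  obtain ⟨a, rfl⟩ : ∃ a, n = a + 1 := ⟨n - 1, by omega⟩
  obtain ⟨b, hb⟩ : ∃ b, (a + 1) * (m - 1) = b + 1 :=
    ⟨(a + 1) * (m - 1) - 1, by
      have := Nat.mul_pos (by omega : 0 < a + 1) (by omega : 0 < m - 1); omega⟩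
  have hb_real : ((a : ℝ) + 1) * (m - 1) = b + 1 := by
    simpa [Nat.cast_sub (by omega : 1 ≤ m)] using congrArg (Nat.cast : ℕ → ℝ) hb
  have hm_real : (m : ℝ) * (a + 1) = (a + b + 1 : ℕ) + 1 := by push_cast; linarith
  have hm_nat : m * (a + 1) = a + b + 1 + 1 := by exact_mod_cast hm_real
  rw [hb, Nat.add_sub_cancel, ← integral_Ioc_eq_integral_Ioo, ← intervalIntegral.integral_of_le
    zero_le_one, integral_pow_mul_one_sub_pow_mul_log, hm_nat]
  push_cast
  rw [hm_real, hb_real, Real.Gamma_nat_eq_factorial, Real.Gamma_nat_eq_factorial,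
    Real.Gamma_nat_eq_factorial, show a + 1 + b + 1 = a + b + 1 + 1 by ring,
    Nat.factorial_succ (a + b + 1), Nat.factorial_succ a]
  push_cast at hm_real ⊢
  field_simp
  rw [hm_real]
end

section
/- Let m, n be positive integers with m ≤ n, and let (ρ₁₁,…,ρ_mm) be distributed according to the symmetric Dirichlet distribution with parameter n on the m-simplex, i.e., with density (Γ(mn)/Γ(n)^m) Π_j ρ_jj^(n−1) on {ρ_jj ≥ 0, Σ_j ρ_jj = 1}. Then the expected Shannon entropy E[−Σ_{j=1}^m ρ_jj ln ρ_jj] equals H_{mn} − H_n. -/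
/-!
Write a point of the corner simplex `{y ∈ ℝ^(k+1) | y ≥ 0, ∑ y ≤ 1}` as `(x, (1 - x) • w)` with
`x ∈ (0, 1)` and `w` in the corner simplex of `ℝ^k`; the Jacobian is `(1 - x)^k`. With `n = p + 1`
and `m = k + 1`, the unnormalised Dirichlet weight `W = ∏ yᵢ^p · (1 - ∑ y)^p` factors as
`x^p (1 - x)^((k+1)p) W(w)`, and the entropy obeys the chain rule
`H(x, (1 - x) • w) = h(x) + (1 - x) H(w)` with `h(x) = -x log x - (1 - x) log (1 - x)`.
So `Z_k = ∫ W` and `T_k = ∫ W H` satisfy a linear recursion whose coefficients are the Beta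
integrals `∫₀¹ x^a (1 - x)^b = a! b! / (a + b + 1)!` and their `-x log x` variants, which bring in
differences of harmonic numbers. Induction on `k` gives `T_k = Z_k (H_{mn} - H_n)`, and the
normalising constant `Γ(mn) / Γ(n)^m` is `1 / Z_k`.
-/

open MeasureTheory Real

/-- The standard probability simplex in `ℝ^m`, parametrized by its first `m-1`
coordinates: the last coordinate is `1 - ∑ y j`. -/
def simplexParam (m : ℕ) : Set (Fin (m - 1) → ℝ) :=
  {y | (∀ j, 0 ≤ y j) ∧ ∑ j, y j ≤ 1}

/-- The density of the symmetric Dirichlet distribution with parameter `n`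
on the `m`-simplex, in the first `m-1` coordinates. -/
noncomputable def dirichletDensity (m n : ℕ) (y : Fin (m - 1) → ℝ) : ℝ :=
  (Real.Gamma (m * n) / Real.Gamma n ^ m) *
    ((∏ j, (y j) ^ (n - 1)) * (1 - ∑ j, y j) ^ (n - 1))

/-- The Shannon entropy of the full probability vector `(y₁,…,y_{m-1}, 1-∑ y)`. -/
noncomputable def simplexEntropy (m : ℕ) (y : Fin (m - 1) → ℝ) : ℝ :=
  -(∑ j, y j * Real.log (y j)) - (1 - ∑ j, y j) * Real.log (1 - ∑ j, y j)

open scoped Nat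

theorem integral_pow_mul_one_sub_pow (a b : ℕ) :
    ∫ x in (0 : ℝ)..1, x ^ a * (1 - x) ^ b = a ! * b ! / (a + b + 1)! := by
  induction b generalizing a with
  | zero =>
    simp [integral_pow, Nat.factorial_succ]
    field_simp
  | succ b ih =>
    have hsplit : ∀ x : ℝ,
        x ^ a * (1 - x) ^ (b + 1) = x ^ a * (1 - x) ^ b - x ^ (a + 1) * (1 - x) ^ b :=
      fun x => by ring
    simp_rw [hsplit]
    rw [intervalIntegral.integral_sub (Continuous.intervalIntegrable (by fun_prop) _ _)
      (Continuous.intervalIntegrable (by fun_prop) _ _), ih, ih]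
    simp only [Nat.factorial_succ, show a + 1 + b + 1 = a + b + 1 + 1 by ring,
      show a + (b + 1) + 1 = a + b + 1 + 1 by ring]
    push_cast
    field_simp
    ring

theorem integral_pow_mul_negMulLog (a : ℕ) :
    ∫ x in (0 : ℝ)..1, x ^ a * negMulLog x = (a + 2 : ℝ)⁻¹ ^ 2 := by
  let F : ℝ → ℝ := fun x => x ^ (a + 1) * negMulLog x / (a + 2) + x ^ (a + 2) / (a + 2) ^ 2
  have hF : ∀ x ∈ Set.Ioo (0 : ℝ) 1, HasDerivAt F (x ^ a * negMulLog x) x := by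
    intro x hx
    refine (((hasDerivAt_pow (a + 1) x).mul (hasDerivAt_negMulLog hx.1.ne')).div_const _).add
      ((hasDerivAt_pow (a + 2) x).div_const _) |>.congr_deriv ?_
    simp only [negMulLog, Nat.add_sub_cancel, pow_succ]
    field_simp
    push_cast
    ring
  rw [intervalIntegral.integral_eq_sub_of_hasDerivAt_of_le zero_le_one (by fun_prop)
    hF (Continuous.intervalIntegrable (by fun_prop) _ _)]
  simp [F]

theorem integral_pow_mul_one_sub_pow_mul_negMulLog (a b : ℕ) :
    ∫ x in (0 : ℝ)..1, x ^ a * (1 - x) ^ b * negMulLog x =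
      (a + 1)! * b ! / (a + b + 2)! * (harmonic (a + b + 2) - harmonic (a + 1) : ℝ) := by
  induction b generalizing a with
  | zero =>
    simp [integral_pow_mul_negMulLog, harmonic_succ, Nat.factorial_succ]
    field_simp
    ring
  | succ b ih =>
    have hsplit : ∀ x : ℝ, x ^ a * (1 - x) ^ (b + 1) * negMulLog x =
        x ^ a * (1 - x) ^ b * negMulLog x - x ^ (a + 1) * (1 - x) ^ b * negMulLog x :=
      fun x => by ring
    simp_rw [hsplit]
    rw [intervalIntegral.integral_sub (Continuous.intervalIntegrable (by fun_prop) _ _)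
      (Continuous.intervalIntegrable (by fun_prop) _ _), ih, ih]
    simp only [Nat.factorial_succ, harmonic_succ, show a + 1 + b + 2 = a + b + 2 + 1 by ring,
      show a + (b + 1) + 2 = a + b + 2 + 1 by ring]
    push_cast
    field_simp
    ring

theorem integral_pow_mul_one_sub_pow_mul_negMulLog_one_sub (a b : ℕ) :
    ∫ x in (0 : ℝ)..1, x ^ a * (1 - x) ^ b * negMulLog (1 - x) =
      a ! * (b + 1)! / (a + b + 2)! * (harmonic (a + b + 2) - harmonic (b + 1) : ℝ) := by
  have h := intervalIntegral.integral_comp_sub_left (a := 0) (b := 1)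
    (fun x : ℝ => x ^ b * (1 - x) ^ a * negMulLog x) 1
  simp only [sub_sub_cancel, sub_self, sub_zero] at h
  calc ∫ x in (0 : ℝ)..1, x ^ a * (1 - x) ^ b * negMulLog (1 - x)
      = ∫ x in (0 : ℝ)..1, x ^ b * (1 - x) ^ a * negMulLog x := by
        rw [← h]; exact intervalIntegral.integral_congr fun x _ => by ring
    _ = _ := by
        rw [integral_pow_mul_one_sub_pow_mul_negMulLog, show b + a + 2 = a + b + 2 by ring,
          mul_comm ((b + 1)! : ℝ)]

theorem integral_fin_cons {E : Type*} [NormedAddCommGroup E] [NormedSpace ℝ E] [CompleteSpace E]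
    {k : ℕ} {F : (Fin (k + 1) → ℝ) → E} (hF : Integrable F) :
    ∫ y, F y = ∫ x, ∫ z, F (Fin.cons x z) := by
  have hmp := (volume_preserving_piFinSuccAbove (fun _ : Fin (k + 1) => ℝ) 0).symm
  have hcons : ∀ p : ℝ × (Fin k → ℝ),
      (MeasurableEquiv.piFinSuccAbove (fun _ => ℝ) 0).symm p = Fin.cons p.1 p.2 := fun p => by
    simp [MeasurableEquiv.piFinSuccAbove_symm_apply, Fin.insertNthEquiv, Fin.insertNth_zero']
  have hint := (hmp.integrable_comp_emb (MeasurableEquiv.measurableEmbedding _)).2 hF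
  rw [Measure.volume_eq_prod, Function.comp_def] at hint
  rw [← hmp.integral_comp', Measure.volume_eq_prod, integral_prod _ hint]
  simp only [hcons]

def cornerSimplex (k : ℕ) : Set (Fin k → ℝ) :=
  {y | (∀ j, 0 ≤ y j) ∧ ∑ j, y j ≤ 1}

theorem isClosed_cornerSimplex (k : ℕ) : IsClosed (cornerSimplex k) := by
  simp only [cornerSimplex, Set.ofPred_and, Set.ofPred_forall]
  exact (isClosed_iInter fun j => isClosed_le continuous_const (continuous_apply j)).inter
    (isClosed_le (by fun_prop) continuous_const)

theorem measurableSet_cornerSimplex (k : ℕ) : MeasurableSet (cornerSimplex k) :=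
  (isClosed_cornerSimplex k).measurableSet

theorem cornerSimplex_subset_Icc (k : ℕ) : cornerSimplex k ⊆ Set.Icc 0 1 := fun _ hy =>
  ⟨hy.1, fun j => (Finset.single_le_sum (fun i _ => hy.1 i) (Finset.mem_univ j)).trans hy.2⟩

theorem isCompact_cornerSimplex (k : ℕ) : IsCompact (cornerSimplex k) :=
  isCompact_Icc.of_isClosed_subset (isClosed_cornerSimplex k) (cornerSimplex_subset_Icc k)

theorem sum_cons_smul {k : ℕ} (x c : ℝ) (w : Fin k → ℝ) :
    ∑ j, (Fin.cons x (c • w) : Fin (k + 1) → ℝ) j = x + c * ∑ j, w j := by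
  simp [Fin.sum_cons, Finset.mul_sum]

theorem mem_Icc_of_cons_mem_cornerSimplex {k : ℕ} {x : ℝ} {z : Fin k → ℝ}
    (h : (Fin.cons x z : Fin (k + 1) → ℝ) ∈ cornerSimplex (k + 1)) : x ∈ Set.Icc 0 1 :=
  ⟨h.1 0, (cornerSimplex_subset_Icc _ h).2 0⟩

theorem cons_mem_cornerSimplex_iff {k : ℕ} {x : ℝ} (hx : x < 1) {w : Fin k → ℝ} :
    (Fin.cons x ((1 - x) • w) : Fin (k + 1) → ℝ) ∈ cornerSimplex (k + 1) ↔
      0 ≤ x ∧ w ∈ cornerSimplex k := by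
  have h1x : 0 < 1 - x := sub_pos.2 hx
  simp only [cornerSimplex, Set.mem_ofPred_eq, Fin.forall_fin_succ, Fin.cons_zero, Fin.cons_succ,
    Pi.smul_apply, smul_eq_mul, sum_cons_smul, mul_nonneg_iff_of_pos_left h1x]
  constructor
  · rintro ⟨⟨hx0, hw⟩, hs⟩
    exact ⟨hx0, hw, by nlinarith⟩
  · rintro ⟨hx0, hw, hs⟩
    exact ⟨⟨hx0, hw⟩, by nlinarith⟩

theorem integral_indicator_cornerSimplex_cons {k : ℕ} (f : (Fin (k + 1) → ℝ) → ℝ)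
    {x : ℝ} (hx : x ∈ Set.Ioo 0 1) :
    ∫ z, (cornerSimplex (k + 1)).indicator f (Fin.cons x z) =
      (1 - x) ^ k * ∫ w in cornerSimplex k, f (Fin.cons x ((1 - x) • w)) := by
  have h1x : 0 < 1 - x := sub_pos.2 hx.2
  have hfiber : (cornerSimplex k).indicator (fun w => f (Fin.cons x ((1 - x) • w))) =
      fun w => (cornerSimplex (k + 1)).indicator f (Fin.cons x ((1 - x) • w)) := by
    ext w
    classical
    simp only [Set.indicator_apply, cons_mem_cornerSimplex_iff hx.2, hx.1.le, true_and]
  rw [← integral_indicator (measurableSet_cornerSimplex k), hfiber,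
    Measure.integral_comp_smul_of_nonneg volume
      (fun z => (cornerSimplex (k + 1)).indicator f (Fin.cons x z)) _ (hR := h1x.le),
    Module.finrank_fin_fun, smul_eq_mul, mul_inv_cancel_left₀ (pow_ne_zero k h1x.ne')]

theorem setIntegral_cornerSimplex_succ {k : ℕ} {f : (Fin (k + 1) → ℝ) → ℝ}
    (hf : IntegrableOn f (cornerSimplex (k + 1))) :
    ∫ y in cornerSimplex (k + 1), f y =
      ∫ x in (0 : ℝ)..1,
        (1 - x) ^ k * ∫ w in cornerSimplex k, f (Fin.cons x ((1 - x) • w)) := by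
  rw [← integral_indicator (measurableSet_cornerSimplex _),
    integral_fin_cons ((integrable_indicator_iff (measurableSet_cornerSimplex _)).2 hf),
    ← setIntegral_eq_integral_of_forall_compl_eq_zero (s := Set.Icc 0 1),
    integral_Icc_eq_integral_Ioo, intervalIntegral.integral_of_le zero_le_one,
    integral_Ioc_eq_integral_Ioo]
  · exact setIntegral_congr_fun measurableSet_Ioo fun x hx =>
      integral_indicator_cornerSimplex_cons f hx
  · intro x hx
    have hz : ∀ z, (cornerSimplex (k + 1)).indicator f (Fin.cons x z) = 0 := fun z =>
      Set.indicator_of_notMem (fun h => hx (mem_Icc_of_cons_mem_cornerSimplex h)) _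
    simp only [hz, integral_zero]

noncomputable def dirichletWeight (p k : ℕ) (y : Fin k → ℝ) : ℝ :=
  (∏ j, y j ^ p) * (1 - ∑ j, y j) ^ p

noncomputable def cornerEntropy (k : ℕ) (y : Fin k → ℝ) : ℝ :=
  ∑ j, negMulLog (y j) + negMulLog (1 - ∑ j, y j)

theorem continuous_dirichletWeight (p k : ℕ) : Continuous (dirichletWeight p k) := by
  unfold dirichletWeight; fun_prop

theorem continuous_cornerEntropy (k : ℕ) : Continuous (cornerEntropy k) := by
  unfold cornerEntropy; fun_prop

theorem dirichletWeight_cons (p k : ℕ) (x : ℝ) (w : Fin k → ℝ) :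
    dirichletWeight p (k + 1) (Fin.cons x ((1 - x) • w)) =
      x ^ p * (1 - x) ^ ((k + 1) * p) * dirichletWeight p k w := by
  have hlast : 1 - (x + (1 - x) * ∑ j, w j) = (1 - x) * (1 - ∑ j, w j) := by ring
  simp only [dirichletWeight, sum_cons_smul, hlast, Fin.prod_univ_succ, Fin.cons_zero,
    Fin.cons_succ, Pi.smul_apply, smul_eq_mul, mul_pow, Finset.prod_mul_distrib,
    Finset.prod_const, Finset.card_univ, Fintype.card_fin]
  ring

theorem cornerEntropy_cons (k : ℕ) (x : ℝ) (w : Fin k → ℝ) :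
    cornerEntropy (k + 1) (Fin.cons x ((1 - x) • w)) =
      negMulLog x + negMulLog (1 - x) + (1 - x) * cornerEntropy k w := by
  have hlast : 1 - (x + (1 - x) * ∑ j, w j) = (1 - x) * (1 - ∑ j, w j) := by ring
  simp only [cornerEntropy, hlast, Fin.sum_univ_succ, Fin.cons_zero, Fin.cons_succ,
    Pi.smul_apply, smul_eq_mul, negMulLog_mul, Finset.sum_add_distrib, ← Finset.mul_sum,
    ← Finset.sum_mul]
  ring

theorem setIntegral_dirichletWeight_mul_succ (p k : ℕ) {g : (Fin (k + 1) → ℝ) → ℝ}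
    (hg : Continuous g) :
    ∫ y in cornerSimplex (k + 1), dirichletWeight p (k + 1) y * g y =
      ∫ x in (0 : ℝ)..1, x ^ p * (1 - x) ^ (k * (p + 1) + p) *
        ∫ w in cornerSimplex k, dirichletWeight p k w * g (Fin.cons x ((1 - x) • w)) := by
  rw [setIntegral_cornerSimplex_succ (f := fun y => dirichletWeight p (k + 1) y * g y)
    (((continuous_dirichletWeight p _).mul hg).continuousOn
    |>.integrableOn_compact (isCompact_cornerSimplex _))]
  refine intervalIntegral.integral_congr fun x _ => ?_
  simp only [dirichletWeight_cons, mul_assoc, integral_const_mul]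
  ring

theorem cornerSimplex_zero : cornerSimplex 0 = Set.univ := by
  ext y; simp [cornerSimplex]

theorem setIntegral_cornerSimplex_zero (f : (Fin 0 → ℝ) → ℝ) :
    ∫ y in cornerSimplex 0, f y = f Fin.elim0 := by
  simp [cornerSimplex_zero, Subsingleton.elim _ (Fin.elim0 : Fin 0 → ℝ), measureReal_def,
    volume_pi]

theorem integral_dirichletWeight_succ (p k : ℕ) :
    ∫ y in cornerSimplex (k + 1), dirichletWeight p (k + 1) y =
      p ! * (k * (p + 1) + p)! / ((k + 1) * (p + 1) + p)! *
        ∫ y in cornerSimplex k, dirichletWeight p k y := by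
  simpa [intervalIntegral.integral_mul_const, integral_pow_mul_one_sub_pow,
    show p + (k * (p + 1) + p) + 1 = (k + 1) * (p + 1) + p by ring] using
    setIntegral_dirichletWeight_mul_succ p k (g := fun _ => 1) continuous_const

theorem integral_dirichletWeight (p k : ℕ) :
    ∫ y in cornerSimplex k, dirichletWeight p k y =
      (p ! : ℝ) ^ (k + 1) / (k * (p + 1) + p)! := by
  induction k with
  | zero =>
    rw [setIntegral_cornerSimplex_zero]
    simp [dirichletWeight, Nat.factorial_ne_zero]
  | succ k ih =>
    rw [integral_dirichletWeight_succ, ih]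
    field_simp
    ring

theorem integral_dirichletWeight_mul_cornerEntropy_succ (p k : ℕ) :
    ∫ y in cornerSimplex (k + 1), dirichletWeight p (k + 1) y * cornerEntropy (k + 1) y =
      (∫ x in (0 : ℝ)..1,
          x ^ p * (1 - x) ^ (k * (p + 1) + p) * (negMulLog x + negMulLog (1 - x))) *
          (∫ y in cornerSimplex k, dirichletWeight p k y) +
        (∫ x in (0 : ℝ)..1, x ^ p * (1 - x) ^ (k * (p + 1) + p + 1)) *
          ∫ y in cornerSimplex k, dirichletWeight p k y * cornerEntropy k y := by
  have hW : IntegrableOn (dirichletWeight p k) (cornerSimplex k) :=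
    (continuous_dirichletWeight p k).continuousOn.integrableOn_compact (isCompact_cornerSimplex k)
  have hWH : IntegrableOn (fun y => dirichletWeight p k y * cornerEntropy k y) (cornerSimplex k) :=
    ((continuous_dirichletWeight p k).mul (continuous_cornerEntropy k)).continuousOn
      |>.integrableOn_compact (isCompact_cornerSimplex k)
  have hinner : ∀ x : ℝ, ∫ w in cornerSimplex k,
      dirichletWeight p k w * cornerEntropy (k + 1) (Fin.cons x ((1 - x) • w)) =
        (negMulLog x + negMulLog (1 - x)) * (∫ w in cornerSimplex k, dirichletWeight p k w) +
          (1 - x) * ∫ w in cornerSimplex k, dirichletWeight p k w * cornerEntropy k w := by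
    intro x
    rw [← integral_const_mul, ← integral_const_mul,
      ← integral_add (hW.const_mul _) (hWH.const_mul _)]
    refine setIntegral_congr_fun (measurableSet_cornerSimplex k) fun w _ => ?_
    rw [cornerEntropy_cons]
    ring
  rw [setIntegral_dirichletWeight_mul_succ p k (continuous_cornerEntropy _),
    ← intervalIntegral.integral_mul_const, ← intervalIntegral.integral_mul_const,
    ← intervalIntegral.integral_add (Continuous.intervalIntegrable (by fun_prop) _ _)
      (Continuous.intervalIntegrable (by fun_prop) _ _)]
  refine intervalIntegral.integral_congr fun x _ => ?_
  simp only [hinner]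
  ring

theorem integral_dirichletWeight_mul_cornerEntropy (p k : ℕ) :
    ∫ y in cornerSimplex k, dirichletWeight p k y * cornerEntropy k y =
      (∫ y in cornerSimplex k, dirichletWeight p k y) *
        (harmonic ((k + 1) * (p + 1)) - harmonic (p + 1) : ℝ) := by
  induction k with
  | zero => simp [setIntegral_cornerSimplex_zero, cornerEntropy]
  | succ k ih =>
    rw [integral_dirichletWeight_mul_cornerEntropy_succ, ih, integral_dirichletWeight_succ]
    set B := k * (p + 1) + p
    have hsplit : ∫ x in (0 : ℝ)..1, x ^ p * (1 - x) ^ B * (negMulLog x + negMulLog (1 - x)) =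
        (∫ x in (0 : ℝ)..1, x ^ p * (1 - x) ^ B * negMulLog x) +
          ∫ x in (0 : ℝ)..1, x ^ p * (1 - x) ^ B * negMulLog (1 - x) := by
      simp only [mul_add]
      exact intervalIntegral.integral_add (Continuous.intervalIntegrable (by fun_prop) _ _)
        (Continuous.intervalIntegrable (by fun_prop) _ _)
    rw [hsplit, integral_pow_mul_one_sub_pow_mul_negMulLog,
      integral_pow_mul_one_sub_pow_mul_negMulLog_one_sub, integral_pow_mul_one_sub_pow,
      show (k + 1) * (p + 1) = B + 1 by ring, show (k + 1 + 1) * (p + 1) = p + B + 2 by ring,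
      show B + 1 + p = p + B + 1 by ring, show p + (B + 1) + 1 = p + B + 2 by ring]
    simp only [Nat.factorial_succ, show p + B + 2 = p + B + 1 + 1 by ring]
    push_cast
    field_simp
    ring

theorem simplexEntropy_succ (k : ℕ) (y : Fin k → ℝ) :
    simplexEntropy (k + 1) y = cornerEntropy k y := by
  -- The sums in `simplexEntropy (k + 1)` range over `Fin (k + 1 - 1)`, which is `Fin k` only
  -- up to unfolding.
  show -(∑ j, y j * log (y j)) - (1 - ∑ j, y j) * log (1 - ∑ j, y j) = _
  simp only [cornerEntropy, negMulLog, Finset.sum_neg_distrib, neg_mul]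
  ring

theorem dirichletDensity_succ_succ (k p : ℕ) (y : Fin k → ℝ) :
    dirichletDensity (k + 1) (p + 1) y =
      (k * (p + 1) + p)! / (p ! : ℝ) ^ (k + 1) * dirichletWeight p k y := by
  have hprod : ((k + 1 : ℕ) : ℝ) * ((p + 1 : ℕ) : ℝ) = ((k * (p + 1) + p : ℕ) : ℝ) + 1 := by
    push_cast; ring
  rw [dirichletDensity, hprod, Real.Gamma_nat_eq_factorial, Nat.cast_succ,
    Real.Gamma_nat_eq_factorial]
  rfl

theorem average_dirichlet_entropy_general (m n : ℕ) (hm : 1 ≤ m) :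
    ∫ y in simplexParam m, dirichletDensity m n y * simplexEntropy m y =
      (harmonic (m * n) : ℝ) - (harmonic n : ℝ) := by
  obtain ⟨k, rfl⟩ := Nat.exists_eq_add_of_le' hm
  rcases n with _ | p
  -- Mathlib's `Γ(0) = 0` makes the density vanish for `n = 0`.
  · simp [dirichletDensity]
  -- `simplexParam (k + 1)` is `cornerSimplex k`, but over `Fin (k + 1 - 1)` instead of `Fin k`.
  show ∫ y : Fin k → ℝ in cornerSimplex k,
      dirichletDensity (k + 1) (p + 1) y * simplexEntropy (k + 1) y = _
  simp only [dirichletDensity_succ_succ, simplexEntropy_succ, mul_assoc, integral_const_mul,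
    integral_dirichletWeight_mul_cornerEntropy, integral_dirichletWeight]
  field_simp

theorem average_dirichlet_entropy (m n : ℕ) (hm : 1 ≤ m) (hmn : m ≤ n) :
    ∫ y in simplexParam m, dirichletDensity m n y * simplexEntropy m y =
      (harmonic (m * n) : ℝ) - (harmonic n : ℝ) :=
  average_dirichlet_entropy_general m n hm
end

section
/- For positive integers m ≤ n, the identity (1/(mn)) Σ_{k=0}^{m−1} ((−1)^k Γ(m+n−k)/(k! Γ(m−k) Γ(n−k))) (ψ(mn+1) − ψ(m+n−k)) = 1 + H_{mn} − H_m − H_n holds, where ψ is the digamma function and H_k the k-th harmonic number. -/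
open Real Finset

lemma digamma_nat_succ (N : ℕ) : digamma ((N : ℝ) + 1) =
    -Real.eulerMascheroniConstant + (harmonic N : ℝ) := by
  unfold digamma
  rw [Real.deriv_Gamma_nat, Real.Gamma_nat_eq_factorial]
  have h : (N.factorial : ℝ) ≠ 0 := by exact_mod_cast N.factorial_ne_zero
  field_simp

lemma key_fd (m n : ℕ) (hmn : m ≤ n) (c : ℝ) :
    ∀ r, r ≤ m → ∀ x : ℕ,
      (fwdDiff 1 (G := ℝ))^[r]
          (fun x : ℕ => ((n + x).descFactorial m : ℝ) * (c - (harmonic (n + x) : ℝ))) x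
        = (m.descFactorial r : ℝ) * ((n + x).descFactorial (m - r) : ℝ) *
            (c - (harmonic (n + x) : ℝ) - ((harmonic m : ℝ) - (harmonic (m - r) : ℝ))) := by
  intro r
  induction r with
  | zero => intro _ x; simp
  | succ r ih =>
    intro hr x
    have hrm : r < m := hr
    obtain ⟨s, hs⟩ : ∃ s, m - r = s + 1 := ⟨m - r - 1, by omega⟩
    have hs' : m - (r + 1) = s := by omega
    have hsn : s ≤ n + x := by omega
    rw [Function.iterate_succ_apply']
    have hfd : ∀ (F : ℕ → ℝ) (y : ℕ), fwdDiff 1 F y = F (y + 1) - F y := fun F y => rfl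
    rw [hfd, ih hrm.le, ih hrm.le, hs, hs']
    have e1 : n + (x + 1) = (n + x) + 1 := by omega
    rw [e1, Nat.succ_descFactorial_succ, Nat.descFactorial_succ,
      Nat.descFactorial_succ m r, hs, harmonic_succ (n + x), harmonic_succ s]
    have h1 : ((n : ℝ) + x + 1) ≠ 0 := by positivity
    have h2 : ((s : ℝ) + 1) ≠ 0 := by positivity
    push_cast [Nat.cast_sub hsn]
    field_simp
    ring

theorem average_subentropy_identity (m n : ℕ) (hm : 1 ≤ m) (hmn : m ≤ n) :
    (1 / (m * n : ℝ)) *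
        ∑ k ∈ Finset.range m,
          ((-1 : ℝ) ^ k * Real.Gamma ((m + n - k : ℕ) : ℝ) /
              ((k.factorial : ℝ) * Real.Gamma ((m - k : ℕ) : ℝ) *
                Real.Gamma ((n - k : ℕ) : ℝ))) *
            (digamma ((m * n : ℕ) + 1) - digamma ((m + n - k : ℕ) : ℝ)) =
      1 + (harmonic (m * n) : ℝ) - (harmonic m : ℝ) - (harmonic n : ℝ) := by
  set c : ℝ := (harmonic (m * n) : ℝ) with hc
  set g : ℕ → ℝ := fun x : ℕ => ((n + x).descFactorial m : ℝ) * (c - (harmonic (n + x) : ℝ))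
    with hg
  have hm1 : m - 1 + 1 = m := by omega
  -- value of the iterated forward difference
  have hΔ : (fwdDiff 1 (G := ℝ))^[m - 1] g 0
      = (m.factorial : ℝ) * n * (c - (harmonic m : ℝ) - (harmonic n : ℝ) + 1) := by
    have h0 := key_fd m n hmn c (m - 1) (by omega) 0
    simp only [hg]
    rw [h0]
    have h1 : m - (m - 1) = 1 := by omega
    have h2 : m.descFactorial (m - 1) = m.factorial := by
      have := Nat.factorial_mul_descFactorial (show m - 1 ≤ m by omega)
      rw [h1] at this
      simpa using this
    rw [h1, h2, Nat.add_zero, Nat.descFactorial_one, harmonic_succ 0]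
    push_cast [harmonic_zero]
    ring
  -- forward difference as a sum
  have hsum := fwdDiff_iter_eq_sum_shift (1 : ℕ) g (m - 1) 0
  rw [hm1] at hsum
  have h2 : ∑ k ∈ Finset.range m,
      (((-1 : ℤ) ^ (m - 1 - (m - 1 - k)) * (m - 1).choose (m - 1 - k) : ℤ) •
        g (0 + (m - 1 - k) • 1))
      = (fwdDiff 1 (G := ℝ))^[m - 1] g 0 := by
    rw [hsum]
    exact Finset.sum_range_reflect
      (fun j => (((-1 : ℤ) ^ (m - 1 - j) * (m - 1).choose j : ℤ) • g (0 + j • 1))) m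
  -- rewrite each summand of the goal
  have hterm : ∀ k ∈ Finset.range m,
      ((-1 : ℝ) ^ k * Real.Gamma ((m + n - k : ℕ) : ℝ) /
          ((k.factorial : ℝ) * Real.Gamma ((m - k : ℕ) : ℝ) *
            Real.Gamma ((n - k : ℕ) : ℝ))) *
        (digamma ((m * n : ℕ) + 1) - digamma ((m + n - k : ℕ) : ℝ))
      = (1 / ((m - 1).factorial : ℝ)) *
          (((-1 : ℤ) ^ (m - 1 - (m - 1 - k)) * (m - 1).choose (m - 1 - k) : ℤ) •
            g (0 + (m - 1 - k) • 1)) := by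
    intro k hk
    rw [Finset.mem_range] at hk
    have e1 : m + n - k = (m + n - 1 - k) + 1 := by omega
    have e2 : m - k = (m - 1 - k) + 1 := by omega
    have e3 : n - k = (n - 1 - k) + 1 := by omega
    have e4 : m - 1 - (m - 1 - k) = k := by omega
    have e5 : 0 + (m - 1 - k) • 1 = m - 1 - k := by simp
    have e6 : n + (m - 1 - k) = m + n - 1 - k := by omega
    rw [e1, e2, e3, e4, e5]
    rw [show ((m + n - 1 - k + 1 : ℕ) : ℝ) = ((m + n - 1 - k : ℕ) : ℝ) + 1 by push_cast; ring,
      show ((m - 1 - k + 1 : ℕ) : ℝ) = ((m - 1 - k : ℕ) : ℝ) + 1 by push_cast; ring,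
      show ((n - 1 - k + 1 : ℕ) : ℝ) = ((n - 1 - k : ℕ) : ℝ) + 1 by push_cast; ring,
      Real.Gamma_nat_eq_factorial, Real.Gamma_nat_eq_factorial, Real.Gamma_nat_eq_factorial,
      digamma_nat_succ, digamma_nat_succ]
    simp only [hg, e6, zsmul_eq_mul, hc]
    rw [Nat.choose_symm (by omega : k ≤ m - 1)]
    have hdf : ((n - 1 - k).factorial) * ((m + n - 1 - k).descFactorial m)
        = (m + n - 1 - k).factorial := by
      have := Nat.factorial_mul_descFactorial (show m ≤ m + n - 1 - k by omega)
      rwa [show m + n - 1 - k - m = n - 1 - k by omega] at this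
    have hch : ((m - 1).choose k) * (k.factorial * (m - 1 - k).factorial)
        = (m - 1).factorial := by
      have := Nat.choose_mul_factorial_mul_factorial (show k ≤ m - 1 by omega)
      rw [← this]; ring
    have hf1 : ((k.factorial : ℝ)) ≠ 0 := by exact_mod_cast k.factorial_ne_zero
    have hf2 : (((m - 1 - k).factorial : ℝ)) ≠ 0 := by
      exact_mod_cast (m - 1 - k).factorial_ne_zero
    have hf3 : (((n - 1 - k).factorial : ℝ)) ≠ 0 := by
      exact_mod_cast (n - 1 - k).factorial_ne_zero
    have hch0 : (((m - 1).choose k : ℝ)) ≠ 0 := by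
      exact_mod_cast (Nat.choose_pos (show k ≤ m - 1 by omega)).ne'
    have hdfR : ((n - 1 - k).factorial : ℝ) * ((m + n - 1 - k).descFactorial m : ℝ)
        = ((m + n - 1 - k).factorial : ℝ) := by exact_mod_cast hdf
    have hchR : (((m - 1).choose k : ℝ)) * ((k.factorial : ℝ) * ((m - 1 - k).factorial : ℝ))
        = ((m - 1).factorial : ℝ) := by exact_mod_cast hch
    rw [← hdfR, ← hchR]
    push_cast
    field_simp
    ring
  rw [Finset.sum_congr rfl hterm, ← Finset.mul_sum, h2, hΔ]
  have hmf : (m.factorial : ℝ) = m * ((m - 1).factorial : ℝ) := by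
    conv_lhs => rw [← hm1]
    push_cast [Nat.factorial_succ]
    norm_cast
    rw [hm1]
  rw [hmf]
  have hm0 : (m : ℝ) ≠ 0 := by positivity
  have hn0 : (n : ℝ) ≠ 0 := by
    have h1n : 1 ≤ n := le_trans hm hmn
    positivity
  have hf4 : (((m - 1).factorial : ℝ)) ≠ 0 := by exact_mod_cast (m - 1).factorial_ne_zero
  field_simp
  ring
end
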